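/- For n ≥ 1, F_{2n}(s) = ∑_{k=0}^{n-1} a(n,k) F_{2k+1}(s) where a(n,k) = (-1)^{n-k-1} (1/(2k+1)) · C(2n, 2k) · G_{2n-2k}, with G the Genocchi numbers. -/

import Mathlib

noncomputable def fibPoly : ℕ → Polynomial ℚ
  | 0 => 0
  | 1 => 1
  | n + 2 => fibPoly (n + 1) + Polynomial.X * fibPoly n

/-- EGF of the Genocchi numbers: 2z/(1+e^z). -/
noncomputable def genocchiSeries : PowerSeries ℚ :=
  2 * PowerSeries.X * (1 + PowerSeries.exp ℚ)⁻¹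

/-- The coefficients g_n with 2z/(1+e^z) = ∑ g_n z^n/n!. -/
noncomputable def gcoef (n : ℕ) : ℚ := n.factorial * PowerSeries.coeff (R := ℚ) n genocchiSeries

/-- The Genocchi number G_{2n}, from 2z/(1+e^z) = z + ∑_{n≥1} (-1)^n G_{2n} z^{2n}/(2n)!. -/
noncomputable def genocchi (n : ℕ) : ℚ := (-1) ^ n * gcoef (2 * n)

/-!
Let `A(z) = ∑ fₘ zᵐ/m!` be the exponential generating function of a sequence with
`fₘ₊₂ = fₘ₊₁ + c fₘ` and `f₀ = 0` (the Fibonacci polynomials are the case `c = s`).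
The coefficients of `A(z) e^{-z}` are the iterated forward differences `Δⁿ f (0)`, and the
recurrence forces `Δⁿ f (0) = (-1)ⁿ⁺¹ fₙ`; thus `A(z) e^{-z} = -A(-z)`, i.e.
`A(z) - A(-z) = -A(-z) (1 + e^z)`. Multiplying by the Genocchi series `2z/(1+e^z)` gives
`(A(z) - A(-z)) · 2z/(1+e^z) = -2z A(-z)`, and comparing the coefficients of `z^{2n+1}`, to which
only the odd part of `A` contributes, expresses `f_{2n}` through the `f_{2k+1}`.
-/

open Finset PowerSeries
open scoped Nat

variable {R : Type*} [CommRing R]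

theorem Finset.sum_range_two_mul {M : Type*} [AddCommMonoid M] (f : ℕ → M) (n : ℕ) :
    ∑ j ∈ range (2 * n), f j = ∑ k ∈ range n, (f (2 * k) + f (2 * k + 1)) := by
  induction n with
  | zero => simp
  | succ n ih => rw [mul_add_one, sum_range_succ, sum_range_succ, sum_range_succ, ih, add_assoc]

def FibRecurrence (c : R) (f : ℕ → R) : Prop :=
  ∀ m, f (m + 2) = f (m + 1) + c * f m

theorem fibRecurrence_fibPoly : FibRecurrence Polynomial.X fibPoly := fun _ => rfl

namespace FibRecurrence

variable {c : R} {f : ℕ → R}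

theorem fwdDiff_iter (hf : FibRecurrence c f) (n : ℕ) :
    FibRecurrence c ((fwdDiff 1)^[n] f) := by
  induction n with
  | zero => exact hf
  | succ n ih =>
    intro m
    simp only [Function.iterate_succ_apply', fwdDiff]
    linear_combination ih (m + 1) - ih m

theorem fwdDiff_iter_apply_zero (hf : FibRecurrence c f) (h0 : f 0 = 0) (n : ℕ) :
    (fwdDiff 1)^[n] f 0 = (-1) ^ (n + 1) * f n := by
  suffices (fwdDiff 1)^[n] f 0 = (-1) ^ (n + 1) * f n ∧
      (fwdDiff 1)^[n] f 1 = (-1) ^ n * (f (n + 1) - f n) from this.1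
  induction n with
  | zero => simp [h0]
  | succ n ih =>
    simp only [Function.iterate_succ_apply', fwdDiff, zero_add]
    constructor
    · linear_combination ih.2 - ih.1
    · linear_combination hf.fwdDiff_iter n 0 + c * ih.1 - (-1) ^ (n + 1) * hf n

end FibRecurrence

namespace PowerSeries

theorem coeff_evalNegHom (ψ : R⟦X⟧) (n : ℕ) :
    coeff n (evalNegHom ψ) = (-1) ^ n * coeff n ψ :=
  coeff_rescale ..

theorem evalNegHom_evalNegHom (ψ : R⟦X⟧) : evalNegHom (evalNegHom ψ) = ψ := by
  simp [evalNegHom, rescale_rescale]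

theorem coeff_two_mul_sub_evalNegHom (ψ : R⟦X⟧) (k : ℕ) :
    coeff (2 * k) (ψ - evalNegHom ψ) = 0 := by
  simp [coeff_evalNegHom, pow_mul]

theorem coeff_two_mul_add_one_sub_evalNegHom (ψ : R⟦X⟧) (k : ℕ) :
    coeff (2 * k + 1) (ψ - evalNegHom ψ) = 2 * coeff (2 * k + 1) ψ := by
  simp [coeff_evalNegHom, pow_succ, pow_mul]
  ring

section Egf

variable [Algebra ℚ R]

def egf (f : ℕ → R) : R⟦X⟧ :=
  mk fun n => (n ! : ℚ)⁻¹ • f n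

theorem egf_mul_evalNegHom_exp (f : ℕ → R) :
    egf f * evalNegHom (exp R) = egf fun n => (fwdDiff 1)^[n] f 0 := by
  ext n
  simp only [coeff_mul, Finset.Nat.sum_antidiagonal_eq_sum_range_succ_mk, egf, coeff_mk,
    fwdDiff_iter_eq_sum_shift, smul_sum]
  refine sum_congr rfl fun k hk => ?_
  have hkn : k ≤ n := Nat.lt_succ_iff.mp (mem_range.mp hk)
  rw [coeff_evalNegHom, coeff_exp, mul_comm, mul_smul_comm, ← map_one (algebraMap ℚ R), ← map_neg,
    ← map_pow, ← map_mul, ← Algebra.smul_def, smul_smul, ← Int.cast_smul_eq_zsmul ℚ, smul_smul,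
    zero_add, smul_eq_mul, mul_one]
  congr 1
  push_cast
  rw [Nat.cast_choose ℚ hkn]
  field_simp

end Egf

end PowerSeries

theorem coeff_genocchiSeries (n : ℕ) : coeff n genocchiSeries = gcoef n / n ! := by
  rw [gcoef, mul_div_cancel_left₀ _ (by positivity)]

theorem coeff_zero_genocchiSeries : coeff 0 genocchiSeries = 0 := by
  simp [genocchiSeries]

theorem map_genocchiSeries_mul_one_add_exp [Algebra ℚ R] :
    genocchiSeries.map (algebraMap ℚ R) * (1 + exp R) = 2 * X := by
  have h : genocchiSeries * (1 + exp ℚ) = 2 * X := by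
    rw [genocchiSeries, mul_assoc, PowerSeries.inv_mul_cancel _ (by simp [constantCoeff_exp]),
      mul_one]
  simpa [map_exp, map_ofNat] using congrArg (map (algebraMap ℚ R)) h

theorem neg_one_pow_mul_choose_mul_genocchi {n k : ℕ} (hk : k < n) :
    (-1 : ℚ) ^ (n - k - 1) * (1 / (2 * (k : ℚ) + 1)) * ((2 * n).choose (2 * k) : ℚ) *
        genocchi (n - k) =
      -(2 * n)! * (coeff (2 * (n - k)) genocchiSeries / (2 * k + 1)!) := by
  obtain ⟨j, rfl⟩ : ∃ j, n = k + j + 1 := ⟨n - k - 1, by omega⟩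
  have hsign : (-1 : ℚ) ^ j * (-1) ^ j = 1 := by rw [← mul_pow]; norm_num
  rw [show k + j + 1 - k - 1 = j by omega, show k + j + 1 - k = j + 1 by omega, genocchi,
    Nat.cast_choose ℚ (by omega : 2 * k ≤ 2 * (k + j + 1)),
    show 2 * (k + j + 1) - 2 * k = 2 * (j + 1) by omega, Nat.factorial_succ (2 * k),
    coeff_genocchiSeries]
  push_cast
  field_simp
  linear_combination -gcoef (2 * (j + 1)) * hsign

namespace FibRecurrence

variable [Algebra ℚ R] {c : R} {f : ℕ → R}

theorem egf_mul_evalNegHom_exp (hf : FibRecurrence c f) (h0 : f 0 = 0) :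
    egf f * evalNegHom (exp R) = -evalNegHom (egf f) := by
  rw [PowerSeries.egf_mul_evalNegHom_exp]
  ext n
  simp [egf, coeff_evalNegHom, hf.fwdDiff_iter_apply_zero h0, pow_succ]

theorem egf_sub_evalNegHom_egf_mul_genocchiSeries (hf : FibRecurrence c f) (h0 : f 0 = 0) :
    (egf f - evalNegHom (egf f)) * genocchiSeries.map (algebraMap ℚ R) =
      -(2 * evalNegHom (egf f)) * X := by
  have h := congrArg evalNegHom (hf.egf_mul_evalNegHom_exp h0)
  simp only [map_mul, map_neg, evalNegHom_evalNegHom] at h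
  linear_combination genocchiSeries.map (algebraMap ℚ R) * h -
    evalNegHom (egf f) * map_genocchiSeries_mul_one_add_exp (R := R)

theorem sum_coeff_genocchiSeries_smul (hf : FibRecurrence c f) (h0 : f 0 = 0) (n : ℕ) :
    ∑ k ∈ range n, (coeff (2 * (n - k)) genocchiSeries / (2 * k + 1)!) • f (2 * k + 1) =
      -((2 * n)! : ℚ)⁻¹ • f (2 * n) := by
  have h := congrArg (coeff (2 * n + 1)) (hf.egf_sub_evalNegHom_egf_mul_genocchiSeries h0)
  rw [coeff_mul, Finset.Nat.sum_antidiagonal_eq_sum_range_succ_mk,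
    show (2 * n + 1).succ = 2 * (n + 1) by omega,
    sum_range_two_mul, sum_range_succ, coeff_succ_mul_X] at h
  simp only [coeff_two_mul_sub_evalNegHom, coeff_two_mul_add_one_sub_evalNegHom, zero_mul,
    zero_add, Nat.sub_self, coeff_map, coeff_zero_genocchiSeries, map_zero, mul_zero,
    add_zero] at h
  apply smul_right_injective R (two_ne_zero : (2 : ℚ) ≠ 0)
  dsimp only
  convert h using 1
  · rw [smul_sum]
    refine sum_congr rfl fun k hk => ?_
    rw [show 2 * n + 1 - (2 * k + 1) = 2 * (n - k) by omega]
    simp only [egf, coeff_mk, Algebra.smul_def, div_eq_mul_inv, map_mul, map_ofNat]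
    ring
  · rw [← map_ofNat C 2, map_neg, coeff_C_mul, coeff_evalNegHom, pow_mul]
    simp only [egf, coeff_mk, Algebra.smul_def, map_neg, map_ofNat]
    ring

theorem eq_sum_genocchi_smul (hf : FibRecurrence c f) (h0 : f 0 = 0) (n : ℕ) :
    f (2 * n) = ∑ k ∈ range n, ((-1 : ℚ) ^ (n - k - 1) * (1 / (2 * (k : ℚ) + 1)) *
      ((2 * n).choose (2 * k) : ℚ) * genocchi (n - k)) • f (2 * k + 1) := by
  rw [sum_congr rfl fun k hk => by rw [neg_one_pow_mul_choose_mul_genocchi (mem_range.mp hk),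
    mul_smul], ← smul_sum, hf.sum_coeff_genocchiSeries_smul h0, smul_smul]
  simp [Nat.factorial_ne_zero]

end FibRecurrence

theorem stmt4_general (n : ℕ) :
    fibPoly (2 * n) =
      ∑ k ∈ Finset.range n,
        Polynomial.C ((-1 : ℚ) ^ (n - k - 1) * (1 / (2 * (k : ℚ) + 1)) *
            ((2 * n).choose (2 * k) : ℚ) * genocchi (n - k)) * fibPoly (2 * k + 1) := by
  simp only [Polynomial.C_mul']
  exact fibRecurrence_fibPoly.eq_sum_genocchi_smul rfl n

theorem stmt4 (n : ℕ) (hn : 1 ≤ n) :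
    fibPoly (2 * n) =
      ∑ k ∈ Finset.range n,
        Polynomial.C ((-1 : ℚ) ^ (n - k - 1) * (1 / (2 * (k : ℚ) + 1)) *
            ((2 * n).choose (2 * k) : ℚ) * genocchi (n - k)) * fibPoly (2 * k + 1) :=
  stmt4_general n
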